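/- arXiv:1808.09077 — 7 statements merged into one kernel-verified Lean document; each statement's English description precedes it below -/
import Mathlib

section
/- Let S be a geodesic local E-invex (GLEI) subset of a Riemannian manifold M and let f : S → ℝ be a geodesic local E-preinvex (GLEP) function on S with respect to η. Then f is geodesic semilocal E-preinvex (GSLEP) on S if and only if f(E(κ)) ≤ f(κ) for every κ ∈ S. -/
/-!
Setting: `M` is (the underlying type of) a Riemannian manifold, `E : M → M` is a map,
and for `x y : M`, `fun t => γ x y t : ℝ → M` stands for the unique geodesic
`γ_{x,y}` (determined by the map `η`) with `γ_{x,y} 0 = y`.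
-/

open Filter Topology Finset

variable {M : Type*}

/-- `u` is the maximal positive number `≤ 1` such that the geodesic
`t ↦ γ (E x) (E y) t` stays in `S` on `[0, u]`. -/
def IsMaxU (γ : M → M → ℝ → M) (E : M → M) (S : Set M) (x y : M) (u : ℝ) : Prop :=
  0 < u ∧ u ≤ 1 ∧ (∀ t : ℝ, 0 ≤ t → t ≤ u → γ (E x) (E y) t ∈ S) ∧
    ∀ u' : ℝ, 0 < u' → u' ≤ 1 →
      (∀ t : ℝ, 0 ≤ t → t ≤ u' → γ (E x) (E y) t ∈ S) → u' ≤ u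

/-- Geodesic local E-invex (GLEI) set: for each `x, y ∈ S` there is a maximal
positive `u ≤ 1` with `γ_{E x, E y} t ∈ S` for all `t ∈ [0, u]`. -/
def GLEI (γ : M → M → ℝ → M) (E : M → M) (S : Set M) : Prop :=
  ∀ x ∈ S, ∀ y ∈ S, ∃ u : ℝ, IsMaxU γ E S x y u

/-- Geodesic semilocal E-preinvex (GSLEP) function on `S`. -/
def GSLEP (γ : M → M → ℝ → M) (E : M → M) (S : Set M) (f : M → ℝ) : Prop :=
  ∀ x ∈ S, ∀ y ∈ S, ∀ u : ℝ, IsMaxU γ E S x y u →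
    ∃ v : ℝ, 0 < v ∧ v ≤ u ∧
      ∀ t : ℝ, 0 ≤ t → t ≤ v → f (γ (E x) (E y) t) ≤ t * f x + (1 - t) * f y

/-- Geodesic semilocal E-preincave function on `S` (reverse inequality). -/
def GSLEPcave (γ : M → M → ℝ → M) (E : M → M) (S : Set M) (f : M → ℝ) : Prop :=
  ∀ x ∈ S, ∀ y ∈ S, ∀ u : ℝ, IsMaxU γ E S x y u →
    ∃ v : ℝ, 0 < v ∧ v ≤ u ∧
      ∀ t : ℝ, 0 ≤ t → t ≤ v → t * f x + (1 - t) * f y ≤ f (γ (E x) (E y) t)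

/-- Geodesic local E-preinvex (GLEP) function on `S`. -/
def GLEP (γ : M → M → ℝ → M) (E : M → M) (S : Set M) (f : M → ℝ) : Prop :=
  ∀ x ∈ S, ∀ y ∈ S, ∀ u : ℝ, IsMaxU γ E S x y u →
    ∃ v : ℝ, 0 < v ∧ v ≤ u ∧
      ∀ t : ℝ, 0 ≤ t → t ≤ v →
        f (γ (E x) (E y) t) ≤ t * f (E x) + (1 - t) * f (E y)

/-- Geodesic quasi-semilocal E-preinvex (GqSLEP) function on `S`. -/
def GqSLEP (γ : M → M → ℝ → M) (E : M → M) (S : Set M) (f : M → ℝ) : Prop :=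
  ∀ x ∈ S, ∀ y ∈ S, f x ≤ f y → ∀ u : ℝ, IsMaxU γ E S x y u →
    ∃ v : ℝ, 0 < v ∧ v ≤ u ∧
      ∀ t : ℝ, 0 ≤ t → t ≤ v → f (γ (E x) (E y) t) ≤ f y

/-- Geodesic pseudo-semilocal E-preinvex (GpSLEP) function on `S`. -/
def GpSLEP (γ : M → M → ℝ → M) (E : M → M) (S : Set M) (f : M → ℝ) : Prop :=
  ∀ x ∈ S, ∀ y ∈ S, f x < f y → ∀ u : ℝ, IsMaxU γ E S x y u →
    ∃ v w : ℝ, 0 < v ∧ v ≤ u ∧ 0 < w ∧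
      ∀ t : ℝ, 0 ≤ t → t ≤ v → f (γ (E x) (E y) t) ≤ f y - t * w

/-- A GLEI subset of `M × ℝ` corresponding to `M`. -/
def GLEIProd (γ : M → M → ℝ → M) (E : M → M) (ω : Set (M × ℝ)) : Prop :=
  ∀ z ∈ ω, ∀ w ∈ ω, ∃ u : ℝ, 0 < u ∧ u ≤ 1 ∧
    (∀ t : ℝ, 0 ≤ t → t ≤ u →
      (γ (E z.1) (E w.1) t, t * z.2 + (1 - t) * w.2) ∈ ω) ∧
    ∀ u' : ℝ, 0 < u' → u' ≤ 1 →
      (∀ t : ℝ, 0 ≤ t → t ≤ u' →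
        (γ (E z.1) (E w.1) t, t * z.2 + (1 - t) * w.2) ∈ ω) → u' ≤ u

/-- `f` is geodesic E-η-semidifferentiable at `a ∈ S`, with one-sided derivative
`D κ = f'_+(γ_{a, E κ})` along the geodesic from `a` to `E κ` (in the convention
`γ_{x,y} 0 = y`, this is the curve `t ↦ γ (E κ) a t`, starting at `a = E a`). -/
def SemiDiffAt (γ : M → M → ℝ → M) (E : M → M) (S : Set M) (f : M → ℝ)
    (D : M → ℝ) (a : M) : Prop :=
  E a = a ∧ ∀ κ ∈ S,
    Tendsto (fun t : ℝ => (f (γ (E κ) a t) - f a) / t) (𝓝[>] (0 : ℝ)) (𝓝 (D κ))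

/-- a GLEP function `f` on a GLEI set `S` is GSLEP on `S`
iff `f (E κ) ≤ f κ` for every `κ ∈ S`. -/
theorem gslep_iff_comp_le {M : Type*} (γ : M → M → ℝ → M) (E : M → M)
    (S : Set M) (f : M → ℝ)
    (hγ0 : ∀ a b : M, γ a b 0 = b)
    (hS : GLEI γ E S) (hf : GLEP γ E S f) :
    GSLEP γ E S f ↔ ∀ κ ∈ S, f (E κ) ≤ f κ := by
  constructor
  · intro h κ hκ
    obtain ⟨u, hu⟩ := hS κ hκ κ hκ
    obtain ⟨v, hv0, hvu, hv⟩ := h κ hκ κ hκ u hu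
    have := hv 0 le_rfl hv0.le
    simpa [hγ0] using this
  · intro h x hx y hy u hu
    obtain ⟨v, hv0, hvu, hv⟩ := hf x hx y hy u hu
    refine ⟨v, hv0, hvu, fun t ht0 htv => ?_⟩
    have h1 : 1 - t ≥ 0 := by linarith [hvu, hu.2.1]
    calc f (γ (E x) (E y) t) ≤ t * f (E x) + (1 - t) * f (E y) := hv t ht0 htv
      _ ≤ t * f x + (1 - t) * f y := by
          have := h x hx; have := h y hy
          nlinarith
end

section
/- Let S be a geodesic local E-invex (GLEI) subset of a Riemannian manifold M and let h : S → ℝ be geodesic semilocal E-preinvex (GSLEP) and geodesic E-η-semidifferentiable at a point κ* ∈ S. Then for every κ ∈ S, h(κ) − h(κ*) ≥ h'_+(γ_{κ*,E(κ)}), where h'_+(γ_{κ*,E(κ)}) denotes the one-sided derivative at κ* along the geodesic γ_{κ*,E(κ)}. -/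
/-!
Setting: `M` is (the underlying type of) a Riemannian manifold, `E : M → M` is a map,
and for `x y : M`, `fun t => γ x y t : ℝ → M` stands for the unique geodesic
`γ_{x,y}` (determined by the map `η`) with `γ_{x,y} 0 = y`.
-/

open Filter Topology Finset

variable {M : Type*}

/-- a GSLEP, geodesic E-η-semidifferentiable (at `κs ∈ S`) function `h`
on a GLEI set `S` satisfies `h κ - h κs ≥ h'_+(γ_{κs, E κ})` for every `κ ∈ S`. -/
theorem gslep_semidiff_lower_bound {M : Type*} (γ : M → M → ℝ → M) (E : M → M)
    (S : Set M) (h : M → ℝ) (D : M → ℝ) (κs : M)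
    (hγ0 : ∀ a b : M, γ a b 0 = b)
    (hS : GLEI γ E S) (hκs : κs ∈ S)
    (hh : GSLEP γ E S h) (hD : SemiDiffAt γ E S h D κs) :
    ∀ κ ∈ S, D κ ≤ h κ - h κs := by
  obtain ⟨hE, hsd⟩ := hD
  intro κ hκ
  obtain ⟨u, hu⟩ := hS κ hκ κs hκs
  obtain ⟨v, hv0, hvu, hineq⟩ := hh κ hκ κs hκs u hu
  have htend := hsd κ hκ
  refine le_of_tendsto htend ?_
  have hmem : Set.Ioc (0:ℝ) v ∈ 𝓝[>] (0:ℝ) := Ioc_mem_nhdsGT_of_mem ⟨le_refl _, hv0⟩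
  filter_upwards [hmem] with t ht
  obtain ⟨ht0, htv⟩ := ht
  have h1 : h (γ (E κ) (E κs) t) ≤ t * h κ + (1 - t) * h κs := hineq t ht0.le htv
  rw [hE] at h1
  rw [div_le_iff₀ ht0]
  nlinarith [h1]
end

section
/- Let S be a geodesic local E-invex (GLEI) subset of a Riemannian manifold M and let h : S → ℝ be geodesic semilocal E-preincave and geodesic E-η-semidifferentiable at a point κ* ∈ S. Then for every κ ∈ S, h(κ) − h(κ*) ≤ h'_+(γ_{κ*,E(κ)}), where h'_+(γ_{κ*,E(κ)}) denotes the one-sided derivative at κ* along the geodesic γ_{κ*,E(κ)}. -/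
/-!
Setting: `M` is (the underlying type of) a Riemannian manifold, `E : M → M` is a map,
and for `x y : M`, `fun t => γ x y t : ℝ → M` stands for the unique geodesic
`γ_{x,y}` (determined by the map `η`) with `γ_{x,y} 0 = y`.
-/

open Filter Topology Finset

variable {M : Type*}

/-- a geodesic semilocal E-preincave, geodesic E-η-semidifferentiable
(at `κs ∈ S`) function `h` on a GLEI set `S` satisfies
`h κ - h κs ≤ h'_+(γ_{κs, E κ})` for every `κ ∈ S`. -/
theorem gslep_cave_semidiff_upper_bound {M : Type*} (γ : M → M → ℝ → M) (E : M → M)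
    (S : Set M) (h : M → ℝ) (D : M → ℝ) (κs : M)
    (hγ0 : ∀ a b : M, γ a b 0 = b)
    (hS : GLEI γ E S) (hκs : κs ∈ S)
    (hh : GSLEPcave γ E S h) (hD : SemiDiffAt γ E S h D κs) :
    ∀ κ ∈ S, h κ - h κs ≤ D κ := by
  obtain ⟨hE, hlim⟩ := hD
  intro κ hκ
  obtain ⟨u, hu⟩ := hS κ hκ κs hκs
  obtain ⟨v, hv0, hvu, hvle⟩ := hh κ hκ κs hκs u hu
  refine ge_of_tendsto (hlim κ hκ) ?_
  filter_upwards [Ioc_mem_nhdsGT_of_mem ⟨le_refl (0:ℝ), hv0⟩] with t ht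
  rw [le_div_iff₀ ht.1]
  have := hvle t ht.1.le ht.2
  rw [hE] at this
  nlinarith [this]
end

section
/- Consider problem (VFP) on a GLEI set K_0 ⊆ M with feasible set K. Let κ̄ ∈ K with E(κ̄) = κ̄, set λ_i = f_i(κ̄)/g_i(κ̄) for i = 1, …, p, and suppose each function f_i − λ_i g_i is geodesic pseudo-semilocal E-preinvex (GpSLEP), each active constraint h_j (j with h_j(κ̄) = 0) is geodesic quasi-semilocal E-preinvex (GqSLEP), and all f_i, g_i, h_j are geodesic E-η-semidifferentiable at κ̄. If there exist ζ ∈ ℝ^p and ξ ∈ ℝ^q such that Σ_i ζ_i (f'_{i+}(γ_{κ̄,E(κ)}) − λ_i g'_{i+}(γ_{κ̄,E(κ)})) + Σ_j ξ_j h'_{j+}(γ_{κ̄,E(κ)}) ≥ 0 for all κ ∈ K, Σ_j ξ_j h_j(κ̄) = 0, and ζ ≥ 0 with ζ ≠ 0, ξ ≥ 0, then κ̄ is a weak efficient solution of (VFP). -/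
/-!
Setting: `M` is (the underlying type of) a Riemannian manifold, `E : M → M` is a map,
and for `x y : M`, `fun t => γ x y t : ℝ → M` stands for the unique geodesic
`γ_{x,y}` (determined by the map `η`) with `γ_{x,y} 0 = y`.
-/

open Filter Topology Finset

variable {M : Type*}

/-- sufficient optimality conditions for (VFP) with each
`f_i - λ_i g_i` GpSLEP (`λ_i = f_i κb / g_i κb`) and each active constraint
GqSLEP, all data geodesic E-η-semidifferentiable at `κb`. -/
theorem vfp_sufficiency_gpslep_gqslep {M : Type*} (γ : M → M → ℝ → M) (E : M → M)
    (K₀ : Set M) (p q : ℕ)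
    (f g : Fin p → M → ℝ) (h : Fin q → M → ℝ)
    (Df Dg : Fin p → M → ℝ) (Dh : Fin q → M → ℝ)
    (hγ0 : ∀ a b : M, γ a b 0 = b)
    (hK₀ : GLEI γ E K₀) (hgpos : ∀ i, ∀ κ ∈ K₀, 0 < g i κ)
    (κb : M) (hκb : κb ∈ K₀) (hκbfeas : ∀ j, h j κb ≤ 0) (hE : E κb = κb)
    (lam : Fin p → ℝ) (hlam : ∀ i, lam i = f i κb / g i κb)
    (hfgP : ∀ i, GpSLEP γ E K₀ (fun x => f i x - lam i * g i x))
    (hhQ : ∀ j, h j κb = 0 → GqSLEP γ E K₀ (h j))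
    (hfD : ∀ i, SemiDiffAt γ E K₀ (f i) (Df i) κb)
    (hgD : ∀ i, SemiDiffAt γ E K₀ (g i) (Dg i) κb)
    (hhD : ∀ j, SemiDiffAt γ E K₀ (h j) (Dh j) κb)
    (ζ : Fin p → ℝ) (ξ : Fin q → ℝ)
    (h1 : ∀ κ, κ ∈ K₀ → (∀ j, h j κ ≤ 0) →
      0 ≤ ∑ i, ζ i * (Df i κ - lam i * Dg i κ) + ∑ j, ξ j * Dh j κ)
    (h3 : ∑ j, ξ j * h j κb = 0)
    (hζ : ∀ i, 0 ≤ ζ i) (hζ0 : ζ ≠ 0) (hξ : ∀ j, 0 ≤ ξ j) :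
    ¬ ∃ κ, (κ ∈ K₀ ∧ ∀ j, h j κ ≤ 0) ∧
      ∀ i, f i κ / g i κ < f i κb / g i κb := by
  rintro ⟨κ, ⟨hκ, hκfeas⟩, hlt⟩
  obtain ⟨u, hu⟩ := hK₀ κ hκ κb hκb
  -- each term ξ j * h j κb is zero
  have hterm0 : ∀ j, ξ j * h j κb = 0 := by
    have hnn : ∀ j ∈ Finset.univ, 0 ≤ -(ξ j * h j κb) := by
      intro j _
      have := mul_nonpos_of_nonneg_of_nonpos (hξ j) (hκbfeas j)
      linarith
    have hsum : ∑ j, -(ξ j * h j κb) = 0 := by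
      rw [Finset.sum_neg_distrib, h3, neg_zero]
    intro j
    have := (Finset.sum_eq_zero_iff_of_nonneg hnn).1 hsum j (Finset.mem_univ j)
    linarith
  -- strict inequality for the fractional objectives at κ
  have hφlt : ∀ i, f i κ - lam i * g i κ < f i κb - lam i * g i κb := by
    intro i
    have hgk : 0 < g i κ := hgpos i κ hκ
    have hgb : 0 < g i κb := hgpos i κb hκb
    have h0 : f i κb - lam i * g i κb = 0 := by
      rw [hlam i, div_mul_cancel₀ _ (ne_of_gt hgb)]; ring
    have h1' : f i κ < lam i * g i κ := by
      have := hlt i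
      rw [← hlam i] at this
      exact (div_lt_iff₀ hgk).1 this
    linarith
  -- derivative bound for objectives
  have hDφ : ∀ i, Df i κ - lam i * Dg i κ < 0 := by
    intro i
    obtain ⟨v, w, hv, hvu, hw, hb⟩ :=
      hfgP i κ hκ κb hκb (hφlt i) u hu
    have hTf := (hfD i).2 κ hκ
    have hTg := (hgD i).2 κ hκ
    have hT : Tendsto (fun t : ℝ =>
        ((f i (γ (E κ) κb t) - lam i * g i (γ (E κ) κb t))
          - (f i κb - lam i * g i κb)) / t) (𝓝[>] (0:ℝ))
        (𝓝 (Df i κ - lam i * Dg i κ)) := by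
      have := hTf.sub (hTg.const_mul (lam i))
      convert this using 2 with t
      ring
    have hle : Df i κ - lam i * Dg i κ ≤ -w := by
      refine le_of_tendsto hT ?_
      filter_upwards [Ioc_mem_nhdsGT_of_mem ⟨le_refl (0:ℝ), hv⟩] with t ht
      have ht0 : 0 < t := ht.1
      have h' := hb t (le_of_lt ht0) ht.2
      rw [hE] at h'
      simp only at h'
      rw [div_le_iff₀ ht0]
      nlinarith
    linarith
  -- derivative bound for active constraints
  have hDh : ∀ j, h j κb = 0 → Dh j κ ≤ 0 := by
    intro j hj0
    have hle0 : h j κ ≤ h j κb := by rw [hj0]; exact hκfeas j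
    obtain ⟨v, hv, hvu, hb⟩ := hhQ j hj0 κ hκ κb hκb hle0 u hu
    have hT := (hhD j).2 κ hκ
    refine le_of_tendsto hT ?_
    filter_upwards [Ioc_mem_nhdsGT_of_mem ⟨le_refl (0:ℝ), hv⟩] with t ht
    have ht0 : 0 < t := ht.1
    have h' := hb t (le_of_lt ht0) ht.2
    rw [hE] at h'
    exact div_nonpos_of_nonpos_of_nonneg (by linarith) ht0.le
  -- second sum is nonpositive
  have hsum2 : ∑ j, ξ j * Dh j κ ≤ 0 := by
    apply Finset.sum_nonpos
    intro j _
    by_cases hj : h j κb = 0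
    · exact mul_nonpos_of_nonneg_of_nonpos (hξ j) (hDh j hj)
    · have hξ0 : ξ j = 0 := by
        have hne : h j κb < 0 := lt_of_le_of_ne (hκbfeas j) hj
        have := hterm0 j
        rcases mul_eq_zero.1 this with h' | h'
        · exact h'
        · exact absurd h' (ne_of_lt hne)
      rw [hξ0]; ring_nf; simp
  -- first sum is negative
  obtain ⟨i₀, hi₀⟩ := Function.ne_iff.1 hζ0
  have hζi₀ : 0 < ζ i₀ := lt_of_le_of_ne (hζ i₀) (fun h' => hi₀ h'.symm)
  have hsum1 : ∑ i, ζ i * (Df i κ - lam i * Dg i κ) < 0 := by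
    calc ∑ i, ζ i * (Df i κ - lam i * Dg i κ)
        < ∑ _i : Fin p, (0:ℝ) := by
          refine Finset.sum_lt_sum (fun i _ =>
            mul_nonpos_of_nonneg_of_nonpos (hζ i) (le_of_lt (hDφ i)))
            ⟨i₀, Finset.mem_univ i₀, ?_⟩
          exact mul_neg_of_pos_of_neg hζi₀ (hDφ i₀)
      _ = 0 := by simp
  have := h1 κ hκ hκfeas
  linarith
end

section
/- Consider problem (VFP) on a GLEI set K_0 ⊆ M with feasible set K. Let κ̄ ∈ K with E(κ̄) = κ̄, set λ_i = f_i(κ̄)/g_i(κ̄) for i = 1, …, p, and suppose all f_i, g_i, h_j are geodesic E-η-semidifferentiable at κ̄. If there exist ζ ∈ ℝ^p and ξ ∈ ℝ^q such that Σ_i ζ_i (f'_{i+}(γ_{κ̄,E(κ)}) − λ_i g'_{i+}(γ_{κ̄,E(κ)})) + Σ_j ξ_j h'_{j+}(γ_{κ̄,E(κ)}) ≥ 0 for all κ ∈ K, Σ_j ξ_j h_j(κ̄) = 0, ζ ≥ 0 with ζ ≠ 0, ξ ≥ 0, and the function κ ↦ Σ_i ζ_i (f_i(κ) − λ_i g_i(κ))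 + Σ_{j active} ξ_j h_j(κ) (sum over the constraints active at κ̄) is geodesic pseudo-semilocal E-preinvex (GpSLEP), then κ̄ is a weak efficient solution of (VFP). -/
/-!
Setting: `M` is (the underlying type of) a Riemannian manifold, `E : M → M` is a map,
and for `x y : M`, `fun t => γ x y t : ℝ → M` stands for the unique geodesic
`γ_{x,y}` (determined by the map `η`) with `γ_{x,y} 0 = y`.
-/

open Filter Topology Finset

variable {M : Type*}

open Classical in
/-- sufficient optimality conditions for (VFP) where the combination
`κ ↦ Σ_i ζ_i (f_i κ - λ_i g_i κ) + Σ_{j active} ξ_j h_j κ` is GpSLEP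
(`λ_i = f_i κb / g_i κb`, the second sum running over constraints active at `κb`),
all data geodesic E-η-semidifferentiable at `κb`. -/
theorem vfp_sufficiency_combined_gpslep {M : Type*} (γ : M → M → ℝ → M) (E : M → M)
    (K₀ : Set M) (p q : ℕ)
    (f g : Fin p → M → ℝ) (h : Fin q → M → ℝ)
    (Df Dg : Fin p → M → ℝ) (Dh : Fin q → M → ℝ)
    (hγ0 : ∀ a b : M, γ a b 0 = b)
    (hK₀ : GLEI γ E K₀) (hgpos : ∀ i, ∀ κ ∈ K₀, 0 < g i κ)
    (κb : M) (hκb : κb ∈ K₀) (hκbfeas : ∀ j, h j κb ≤ 0) (hE : E κb = κb)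
    (lam : Fin p → ℝ) (hlam : ∀ i, lam i = f i κb / g i κb)
    (hfD : ∀ i, SemiDiffAt γ E K₀ (f i) (Df i) κb)
    (hgD : ∀ i, SemiDiffAt γ E K₀ (g i) (Dg i) κb)
    (hhD : ∀ j, SemiDiffAt γ E K₀ (h j) (Dh j) κb)
    (ζ : Fin p → ℝ) (ξ : Fin q → ℝ)
    (h1 : ∀ κ, κ ∈ K₀ → (∀ j, h j κ ≤ 0) →
      0 ≤ ∑ i, ζ i * (Df i κ - lam i * Dg i κ) + ∑ j, ξ j * Dh j κ)
    (h3 : ∑ j, ξ j * h j κb = 0)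
    (hζ : ∀ i, 0 ≤ ζ i) (hζ0 : ζ ≠ 0) (hξ : ∀ j, 0 ≤ ξ j)
    (hcomb : GpSLEP γ E K₀ (fun x =>
      ∑ i, ζ i * (f i x - lam i * g i x) +
        ∑ j, (if h j κb = 0 then ξ j * h j x else 0))) :
    ¬ ∃ κ, (κ ∈ K₀ ∧ ∀ j, h j κ ≤ 0) ∧
      ∀ i, f i κ / g i κ < f i κb / g i κb := by

  rintro ⟨κ, ⟨hκ0, hκfeas⟩, hlt⟩
  -- Each term ξ j * h j κb is zero.
  have hnonpos : ∀ j ∈ Finset.univ, ξ j * h j κb ≤ (fun _ => (0:ℝ)) j :=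
    fun j _ => mul_nonpos_of_nonneg_of_nonpos (hξ j) (hκbfeas j)
  have hterm0 : ∀ j, ξ j * h j κb = 0 := by
    intro j
    by_contra hne
    have hj : ξ j * h j κb < 0 :=
      lt_of_le_of_ne (hnonpos j (Finset.mem_univ j)) hne
    have := Finset.sum_lt_sum hnonpos ⟨j, Finset.mem_univ j, hj⟩
    simp only [Finset.sum_const_zero] at this
    linarith [h3, this]
  have hξ0 : ∀ j, h j κb ≠ 0 → ξ j = 0 := by
    intro j hj
    rcases mul_eq_zero.mp (hterm0 j) with h' | h'
    · exact h'
    · exact absurd h' hj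
  set F : M → ℝ := fun x =>
      ∑ i, ζ i * (f i x - lam i * g i x) +
        ∑ j, (if h j κb = 0 then ξ j * h j x else 0) with hFdef
  -- F κb = 0
  have hFκb : F κb = 0 := by
    have h1' : ∀ i ∈ Finset.univ, ζ i * (f i κb - lam i * g i κb) = 0 := by
      intro i _
      rw [hlam, div_mul_cancel₀ _ (hgpos i κb hκb).ne']
      ring
    have h2' : ∀ j ∈ Finset.univ,
        (if h j κb = 0 then ξ j * h j κb else 0) = 0 := by
      intro j _
      split_ifs with hj
      · rw [hj]; ring
      · rfl
    have hF' : F κb = ∑ i, ζ i * (f i κb - lam i * g i κb) +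
        ∑ j, (if h j κb = 0 then ξ j * h j κb else 0) := rfl
    rw [hF', Finset.sum_eq_zero h1', Finset.sum_eq_zero h2', add_zero]
  -- F κ < 0
  have hFκ : F κ < 0 := by
    obtain ⟨i0, hi0⟩ := Function.ne_iff.mp hζ0
    have hi0pos : 0 < ζ i0 := lt_of_le_of_ne (hζ i0) (Ne.symm hi0)
    have hterm : ∀ i, f i κ - lam i * g i κ ≤ 0 ∨ True := fun _ => Or.inr trivial
    have hneg : ∀ i, f i κ - lam i * g i κ < 0 := by
      intro i
      have := hlt i
      rw [← hlam i] at this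
      have := (div_lt_iff₀ (hgpos i κ hκ0)).mp this
      linarith
    have hsum1 : ∑ i, ζ i * (f i κ - lam i * g i κ) < 0 := by
      have hle : ∀ i ∈ Finset.univ,
          ζ i * (f i κ - lam i * g i κ) ≤ (fun _ => (0:ℝ)) i :=
        fun i _ => mul_nonpos_of_nonneg_of_nonpos (hζ i) (hneg i).le
      have hstrict : ζ i0 * (f i0 κ - lam i0 * g i0 κ) < 0 :=
        mul_neg_of_pos_of_neg hi0pos (hneg i0)
      have := Finset.sum_lt_sum hle ⟨i0, Finset.mem_univ i0, hstrict⟩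
      simpa using this
    have hsum2 : ∑ j, (if h j κb = 0 then ξ j * h j κ else 0) ≤ 0 := by
      apply Finset.sum_nonpos
      intro j _
      split_ifs
      · exact mul_nonpos_of_nonneg_of_nonpos (hξ j) (hκfeas j)
      · exact le_refl 0
    have hF' : F κ = ∑ i, ζ i * (f i κ - lam i * g i κ) +
        ∑ j, (if h j κb = 0 then ξ j * h j κ else 0) := rfl
    rw [hF']
    linarith
  -- GLEI gives u, then GpSLEP gives v, w
  obtain ⟨u, hu⟩ := hK₀ κ hκ0 κb hκb
  have hFlt : F κ < F κb := by rw [hFκb]; exact hFκ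
  obtain ⟨v, w, hvpos, hvu, hwpos, hFbd⟩ := hcomb κ hκ0 κb hκb hFlt u hu
  rw [hE] at hFbd
  -- The directional derivative of F at κb along κ
  set DF : ℝ := ∑ i, ζ i * (Df i κ - lam i * Dg i κ) +
      ∑ j, (if h j κb = 0 then ξ j * Dh j κ else 0) with hDFdef
  have hDFge : 0 ≤ DF := by
    have : ∑ j, (if h j κb = 0 then ξ j * Dh j κ else 0) = ∑ j, ξ j * Dh j κ := by
      apply Finset.sum_congr rfl
      intro j _
      split_ifs with hj
      · rfl
      · rw [hξ0 j hj]; ring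
    rw [hDFdef, this]
    exact h1 κ hκ0 hκfeas
  -- Tendsto of the difference quotient
  set c : ℝ → M := fun t => γ (E κ) κb t with hcdef
  have T : Tendsto (fun t : ℝ =>
      ∑ i, ζ i * ((f i (c t) - f i κb) / t - lam i * ((g i (c t) - g i κb) / t))
      + ∑ j, (if h j κb = 0 then ξ j * ((h j (c t) - h j κb) / t) else 0))
      (𝓝[>] (0:ℝ)) (𝓝 DF) := by
    apply Tendsto.add
    · apply tendsto_finset_sum
      intro i _
      exact (((hfD i).2 κ hκ0).sub (((hgD i).2 κ hκ0).const_mul (lam i))).const_mul (ζ i)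
    · apply tendsto_finset_sum
      intro j _
      split_ifs with hj
      · exact ((hhD j).2 κ hκ0).const_mul (ξ j)
      · exact tendsto_const_nhds
  have heq : ∀ᶠ t in 𝓝[>] (0:ℝ),
      ∑ i, ζ i * ((f i (c t) - f i κb) / t - lam i * ((g i (c t) - g i κb) / t))
      + ∑ j, (if h j κb = 0 then ξ j * ((h j (c t) - h j κb) / t) else 0)
      = (F (c t) - F κb) / t := by
    filter_upwards [self_mem_nhdsWithin] with t ht
    have ht' : (t:ℝ) ≠ 0 := ne_of_gt ht
    simp only [hFdef]
    rw [add_sub_add_comm, add_div, ← Finset.sum_sub_distrib, ← Finset.sum_sub_distrib,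
      Finset.sum_div, Finset.sum_div]
    congr 1
    · apply Finset.sum_congr rfl
      intro i _
      field_simp
      ring
    · apply Finset.sum_congr rfl
      intro j _
      split_ifs
      · field_simp
      · simp
  have T' : Tendsto (fun t : ℝ => (F (c t) - F κb) / t) (𝓝[>] (0:ℝ)) (𝓝 DF) :=
    T.congr' heq
  -- Eventually the quotient ≤ -w
  have hbound : ∀ᶠ t in 𝓝[>] (0:ℝ), (F (c t) - F κb) / t ≤ -w := by
    filter_upwards [Ioc_mem_nhdsGT_of_mem (Set.mem_Ico.mpr ⟨le_refl 0, hvpos⟩)] with t ht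
    have hb := hFbd t ht.1.le ht.2
    rw [div_le_iff₀ ht.1]
    have : F (c t) ≤ F κb - t * w := hb
    linarith
  have hle : DF ≤ -w := le_of_tendsto T' hbound
  linarith
end

section
/- (General Weak Duality) Let κ ∈ K be feasible for (VFP) and let (α, β, λ, ζ) be feasible for the dual (VFD) with E(λ) = λ. If the function x ↦ Σ_i α_i (f_i(x) − ζ_i g_i(x)) is geodesic pseudo-semilocal E-preinvex (GpSLEP), the function x ↦ Σ_j β_j h_j(x) is geodesic quasi-semilocal E-preinvex (GqSLEP), and both are geodesic E-η-semidifferentiable at λ, then it is not the case that f_i(κ)/g_i(κ) ≤ ζ_i for all i with strict inequality for at least one i. -/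
/-!
Setting: `M` is (the underlying type of) a Riemannian manifold, `E : M → M` is a map,
and for `x y : M`, `fun t => γ x y t : ℝ → M` stands for the unique geodesic
`γ_{x,y}` (determined by the map `η`) with `γ_{x,y} 0 = y`.
-/

open Filter Topology Finset

variable {M : Type*}

/-- General Weak Duality: if `κ` is feasible for (VFP),
`(α, β, λ, ζ)` is feasible for the dual (VFD) with `E lam = lam`,
`x ↦ Σ_i α_i (f_i x - ζ_i g_i x)` is GpSLEP, `x ↦ Σ_j β_j h_j x` is GqSLEP, and
both are geodesic E-η-semidifferentiable at `lam`, then it is not the case that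
`f_i κ / g_i κ ≤ ζ_i` for all `i` with strict inequality for some `i`. -/
theorem vfp_weak_duality {M : Type*} (γ : M → M → ℝ → M) (E : M → M)
    (K₀ : Set M) (p m : ℕ)
    (f g : Fin p → M → ℝ) (h : Fin m → M → ℝ)
    (Df Dg : Fin p → M → ℝ) (Dh : Fin m → M → ℝ)
    (hγ0 : ∀ a b : M, γ a b 0 = b)
    (hK₀ : GLEI γ E K₀) (hgpos : ∀ i, ∀ x ∈ K₀, 0 < g i x)
    -- `κ` feasible for (VFP)
    (κ : M) (hκ : κ ∈ K₀) (hκfeas : ∀ j, h j κ ≤ 0)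
    -- `(α, β, lam, ζ)` feasible for the dual (VFD)
    (α ζ : Fin p → ℝ) (β : Fin m → ℝ) (lam : M)
    (hlam : lam ∈ K₀) (hElam : E lam = lam)
    (hα : ∀ i, 0 < α i) (hβ : ∀ j, 0 ≤ β j) (hζ : ∀ i, 0 ≤ ζ i)
    (hfD : ∀ i, SemiDiffAt γ E K₀ (f i) (Df i) lam)
    (hgD : ∀ i, SemiDiffAt γ E K₀ (g i) (Dg i) lam)
    (hhD : ∀ j, SemiDiffAt γ E K₀ (h j) (Dh j) lam)
    (hdual1 : ∀ x ∈ K₀,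
      0 ≤ ∑ i, α i * (Df i x - ζ i * Dg i x) + ∑ j, β j * Dh j x)
    (hdual2 : ∀ i, 0 ≤ f i lam - ζ i * g i lam)
    (hdual3 : ∀ j, 0 ≤ β j * h j lam)
    -- generalized convexity hypotheses
    (hP : GpSLEP γ E K₀ (fun x => ∑ i, α i * (f i x - ζ i * g i x)))
    (hQ : GqSLEP γ E K₀ (fun x => ∑ j, β j * h j x))
    (hPD : SemiDiffAt γ E K₀ (fun x => ∑ i, α i * (f i x - ζ i * g i x))
      (fun x => ∑ i, α i * (Df i x - ζ i * Dg i x)) lam)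
    (hQD : SemiDiffAt γ E K₀ (fun x => ∑ j, β j * h j x)
      (fun x => ∑ j, β j * Dh j x) lam) :
    ¬ ((∀ i, f i κ / g i κ ≤ ζ i) ∧ ∃ i, f i κ / g i κ < ζ i) := by
  rintro ⟨hle, i₀, hlt⟩
  set φ : M → ℝ := fun x => ∑ i, α i * (f i x - ζ i * g i x) with hφ
  set ψ : M → ℝ := fun x => ∑ j, β j * h j x with hψ
  -- φ κ < 0 ≤ φ lam
  have hφκ : φ κ < 0 := by
    have : ∑ i, α i * (f i κ - ζ i * g i κ) < ∑ i : Fin p, (0 : ℝ) := by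
      apply Finset.sum_lt_sum
      · intro i _
        have hg := hgpos i κ hκ
        have : f i κ ≤ ζ i * g i κ := by
          have := (div_le_iff₀ hg).mp (hle i); linarith
        nlinarith [hα i]
      · refine ⟨i₀, Finset.mem_univ _, ?_⟩
        have hg := hgpos i₀ κ hκ
        have : f i₀ κ < ζ i₀ * g i₀ κ := by
          have := (div_lt_iff₀ hg).mp hlt; linarith
        nlinarith [hα i₀]
    simpa using this
  have hφlam : 0 ≤ φ lam :=
    Finset.sum_nonneg fun i _ => mul_nonneg (hα i).le (hdual2 i)
  have hψκ : ψ κ ≤ 0 := by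
    apply Finset.sum_nonpos
    intro j _
    exact mul_nonpos_of_nonneg_of_nonpos (hβ j) (hκfeas j)
  have hψlam : 0 ≤ ψ lam := Finset.sum_nonneg fun j _ => hdual3 j
  obtain ⟨u, hu⟩ := hK₀ κ hκ lam hlam
  -- pseudo part
  obtain ⟨v, w, hv, hvu, hw, hbound⟩ := hP κ hκ lam hlam (lt_of_lt_of_le hφκ hφlam) u hu
  rw [hElam] at hbound
  have hDφ : (∑ i, α i * (Df i κ - ζ i * Dg i κ)) ≤ -w := by
    refine le_of_tendsto (hPD.2 κ hκ) ?_
    filter_upwards [Ioc_mem_nhdsGT_of_mem (Set.left_mem_Ico.mpr hv)] with t ht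
    have h1 := hbound t ht.1.le ht.2
    rw [div_le_iff₀ ht.1]
    linarith
  -- quasi part
  obtain ⟨v', hv', hv'u, hbound'⟩ := hQ κ hκ lam hlam (hψκ.trans hψlam) u hu
  rw [hElam] at hbound'
  have hDψ : (∑ j, β j * Dh j κ) ≤ 0 := by
    refine le_of_tendsto (hQD.2 κ hκ) ?_
    filter_upwards [Ioc_mem_nhdsGT_of_mem (Set.left_mem_Ico.mpr hv')] with t ht
    have h1 := hbound' t ht.1.le ht.2
    exact div_nonpos_of_nonpos_of_nonneg (by linarith) ht.1.le
  have := hdual1 κ hκ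
  linarith
end

section
/- Let κ ∈ K be feasible for (VFP) and let (α, β, λ, ζ) be feasible for the dual (VFD) with E(λ) = λ. If the function x ↦ Σ_i α_i (f_i(x) − ζ_i g_i(x)) + Σ_j β_j h_j(x) is geodesic pseudo-semilocal E-preinvex (GpSLEP) and geodesic E-η-semidifferentiable at λ, then it is not the case that f_i(κ)/g_i(κ) ≤ ζ_i for all i with strict inequality for at least one i. -/
/-!
Setting: `M` is (the underlying type of) a Riemannian manifold, `E : M → M` is a map,
and for `x y : M`, `fun t => γ x y t : ℝ → M` stands for the unique geodesic
`γ_{x,y}` (determined by the map `η`) with `γ_{x,y} 0 = y`.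
-/

open Filter Topology Finset

variable {M : Type*}

/-- weak duality, combined form: if `κ` is feasible for (VFP),
`(α, β, λ, ζ)` is feasible for the dual (VFD) with `E lam = lam`, and
`x ↦ Σ_i α_i (f_i x - ζ_i g_i x) + Σ_j β_j h_j x` is GpSLEP and geodesic
E-η-semidifferentiable at `lam`, then it is not the case that
`f_i κ / g_i κ ≤ ζ_i` for all `i` with strict inequality for some `i`. -/
theorem vfp_weak_duality_combined {M : Type*} (γ : M → M → ℝ → M) (E : M → M)
    (K₀ : Set M) (p m : ℕ)
    (f g : Fin p → M → ℝ) (h : Fin m → M → ℝ)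
    (Df Dg : Fin p → M → ℝ) (Dh : Fin m → M → ℝ)
    (hγ0 : ∀ a b : M, γ a b 0 = b)
    (hK₀ : GLEI γ E K₀) (hgpos : ∀ i, ∀ x ∈ K₀, 0 < g i x)
    -- `κ` feasible for (VFP)
    (κ : M) (hκ : κ ∈ K₀) (hκfeas : ∀ j, h j κ ≤ 0)
    -- `(α, β, lam, ζ)` feasible for the dual (VFD)
    (α ζ : Fin p → ℝ) (β : Fin m → ℝ) (lam : M)
    (hlam : lam ∈ K₀) (hElam : E lam = lam)
    (hα : ∀ i, 0 < α i) (hβ : ∀ j, 0 ≤ β j) (hζ : ∀ i, 0 ≤ ζ i)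
    (hfD : ∀ i, SemiDiffAt γ E K₀ (f i) (Df i) lam)
    (hgD : ∀ i, SemiDiffAt γ E K₀ (g i) (Dg i) lam)
    (hhD : ∀ j, SemiDiffAt γ E K₀ (h j) (Dh j) lam)
    (hdual1 : ∀ x ∈ K₀,
      0 ≤ ∑ i, α i * (Df i x - ζ i * Dg i x) + ∑ j, β j * Dh j x)
    (hdual2 : ∀ i, 0 ≤ f i lam - ζ i * g i lam)
    (hdual3 : ∀ j, 0 ≤ β j * h j lam)
    -- generalized convexity hypotheses
    (hP : GpSLEP γ E K₀
      (fun x => ∑ i, α i * (f i x - ζ i * g i x) + ∑ j, β j * h j x))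
    (hPD : SemiDiffAt γ E K₀
      (fun x => ∑ i, α i * (f i x - ζ i * g i x) + ∑ j, β j * h j x)
      (fun x => ∑ i, α i * (Df i x - ζ i * Dg i x) + ∑ j, β j * Dh j x) lam) :
    ¬ ((∀ i, f i κ / g i κ ≤ ζ i) ∧ ∃ i, f i κ / g i κ < ζ i) := by
  rintro ⟨hall, i₀, hstrict⟩
  set φ : M → ℝ := fun x => ∑ i, α i * (f i x - ζ i * g i x) + ∑ j, β j * h j x with hφ
  -- φ κ < 0
  have hsum1 : ∑ i, α i * (f i κ - ζ i * g i κ) < 0 := by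
    have : ∑ i, α i * (f i κ - ζ i * g i κ) < ∑ i : Fin p, (0 : ℝ) := by
      apply Finset.sum_lt_sum
      · intro i _
        have := (div_le_iff₀ (hgpos i κ hκ)).mp (hall i)
        nlinarith [hα i]
      · refine ⟨i₀, Finset.mem_univ _, ?_⟩
        have := (div_lt_iff₀ (hgpos i₀ κ hκ)).mp hstrict
        nlinarith [hα i₀]
    simpa using this
  have hsum2 : ∑ j, β j * h j κ ≤ 0 := by
    apply Finset.sum_nonpos
    intro j _
    exact mul_nonpos_of_nonneg_of_nonpos (hβ j) (hκfeas j)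
  have hφκ : φ κ < 0 := by simp only [hφ]; linarith
  -- φ lam ≥ 0
  have hφlam : 0 ≤ φ lam := by
    apply add_nonneg
    · exact Finset.sum_nonneg fun i _ => mul_nonneg (hα i).le (hdual2 i)
    · exact Finset.sum_nonneg fun j _ => hdual3 j
  have hlt : φ κ < φ lam := lt_of_lt_of_le hφκ hφlam
  obtain ⟨u, hu⟩ := hK₀ κ hκ lam hlam
  obtain ⟨v, w, hv, hvu, hw, hvw⟩ := hP κ hκ lam hlam hlt u hu
  -- the one-sided derivative D κ ≤ -w
  have hten := hPD.2 κ hκ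
  have hDle : (∑ i, α i * (Df i κ - ζ i * Dg i κ) + ∑ j, β j * Dh j κ) ≤ -w := by
    refine le_of_tendsto hten ?_
    filter_upwards [Ioc_mem_nhdsGT_of_mem (Set.mem_Ico.mpr ⟨le_refl 0, hv⟩)]
      with t ht
    obtain ⟨ht0, htv⟩ := ht
    have key := hvw t ht0.le htv
    rw [hElam] at key
    rw [div_le_iff₀ ht0]
    linarith
  have hge := hdual1 κ hκ
  linarith
end
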